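/- arXiv:0901.1148 — 2 statements merged into one kernel-verified Lean document; each statement's English description precedes it below -/
import Mathlib

section
/- Under the hypotheses above, the operator norm satisfies ‖(α₀Γ)²‖ ≤ 2α₀‖Γ‖_∞ · ‖α₀Γ‖, where the norms are operator norms on L²(A, dν) and the supremum in the variational characterization of ‖α₀Γ‖ may be taken over positive functions only (since α₀Γ is positivity preserving with positive kernel). -/
/-!
The kernel `κ x y = α₀ / (4π ‖x - y‖)` is symmetric, so Schur's test (Cauchy–Schwarz against
the weight `κ x ·`, then Tonelli) turns its row bound `α₀ Γinf` into `‖T‖ ≤ α₀ Γinf`, whence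
`‖T ∘ T‖ ≤ ‖T‖² ≤ α₀ Γinf ‖T‖`. The row bound is only available where `κ x ·` is integrable:
elsewhere the Bochner integrals in the hypotheses are junk zeros. If integrability fails on a set
of positive measure, testing `T` on the indicators of the sets `{y | ∫⁻ z, κ y z ≤ n}` shows that
these sets are null, so integrability fails almost everywhere, `T` kills every nonnegative
function, and `T = 0`.
-/

open MeasureTheory Real
open scoped ENNReal NNReal

section

variable {X : Type*} [MeasurableSpace X] {ν : Measure X}

theorem ENNReal.sq_lintegral_mul_le {k g : X → ℝ≥0∞} (hk : AEMeasurable k ν)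
    (hg : AEMeasurable g ν) :
    (∫⁻ y, k y * g y ∂ν) ^ 2 ≤ (∫⁻ y, k y ∂ν) * ∫⁻ y, k y * g y ^ 2 ∂ν := by
  have hsqrt : ∀ y, k y ^ (2⁻¹ : ℝ) * (k y * g y ^ 2) ^ (2⁻¹ : ℝ) = k y * g y := fun y => by
    rw [← ENNReal.mul_rpow_of_nonneg _ _ (by norm_num), ← mul_assoc, ← sq, ← mul_pow]
    exact_mod_cast ENNReal.pow_rpow_inv_natCast two_ne_zero _
  have h := ENNReal.lintegral_mul_norm_pow_le (g := fun y => k y * g y ^ 2) hk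
    (hk.mul (hg.pow_const 2)) (p := 2⁻¹) (q := 2⁻¹) (by norm_num) (by norm_num) (by norm_num)
  simp only [hsqrt] at h
  calc (∫⁻ y, k y * g y ∂ν) ^ 2
      ≤ ((∫⁻ y, k y ∂ν) ^ (2⁻¹ : ℝ) * (∫⁻ y, k y * g y ^ 2 ∂ν) ^ (2⁻¹ : ℝ)) ^ 2 := by gcongr
    _ = (∫⁻ y, k y ∂ν) * ∫⁻ y, k y * g y ^ 2 ∂ν := by
      rw [← ENNReal.mul_rpow_of_nonneg _ _ (by norm_num)]
      exact_mod_cast ENNReal.rpow_inv_natCast_pow two_ne_zero _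

theorem lintegral_sq_lintegral_mul_le [SFinite ν] {K : X → X → ℝ≥0∞}
    (hK : Measurable (Function.uncurry K)) {g : X → ℝ≥0∞} (hg : AEMeasurable g ν)
    {C₁ C₂ : ℝ≥0∞} (hrow : ∀ᵐ x ∂ν, ∫⁻ y, K x y ∂ν ≤ C₁)
    (hcol : ∀ᵐ y ∂ν, ∫⁻ x, K x y ∂ν ≤ C₂) :
    ∫⁻ x, (∫⁻ y, K x y * g y ∂ν) ^ 2 ∂ν ≤ C₁ * C₂ * ∫⁻ y, g y ^ 2 ∂ν := by
  have hKg : AEMeasurable (fun p : X × X => K p.1 p.2 * g p.2 ^ 2) (ν.prod ν) :=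
    hK.aemeasurable.mul (hg.pow_const 2).comp_snd
  calc ∫⁻ x, (∫⁻ y, K x y * g y ∂ν) ^ 2 ∂ν
      ≤ ∫⁻ x, C₁ * ∫⁻ y, K x y * g y ^ 2 ∂ν ∂ν := by
        refine lintegral_mono_ae (hrow.mono fun x hx => ?_)
        calc _ ≤ _ := ENNReal.sq_lintegral_mul_le hK.of_uncurry_left.aemeasurable hg
          _ ≤ _ := by gcongr
    _ = C₁ * ∫⁻ y, (∫⁻ x, K x y ∂ν) * g y ^ 2 ∂ν := by
        rw [lintegral_const_mul'' _ hKg.lintegral_prod_right', lintegral_lintegral_swap hKg]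
        congr 1
        exact lintegral_congr fun y => lintegral_mul_const (g y ^ 2) (hK.of_uncurry_right (y := y))
    _ ≤ C₁ * ∫⁻ y, C₂ * g y ^ 2 ∂ν := by
        gcongr 1
        exact lintegral_mono_ae (hcol.mono fun y hy => by gcongr)
    _ = C₁ * C₂ * ∫⁻ y, g y ^ 2 ∂ν := by
        rw [lintegral_const_mul'' _ (hg.pow_const 2), mul_assoc]

theorem eLpNorm_two_le_mul_of_lintegral_sq_le {E F : Type*} [NormedAddCommGroup E]
    [NormedAddCommGroup F] {f : X → E} {g : X → F} {C : ℝ≥0∞}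
    (h : ∫⁻ x, ‖f x‖ₑ ^ 2 ∂ν ≤ C ^ 2 * ∫⁻ x, ‖g x‖ₑ ^ 2 ∂ν) :
    eLpNorm f 2 ν ≤ C * eLpNorm g 2 ν := by
  simp only [eLpNorm_eq_lintegral_rpow_enorm_toReal two_ne_zero ENNReal.ofNat_ne_top,
    ENNReal.toReal_ofNat, ENNReal.rpow_two]
  calc (∫⁻ x, ‖f x‖ₑ ^ 2 ∂ν) ^ (1 / (2 : ℝ))
      ≤ (C ^ 2 * ∫⁻ x, ‖g x‖ₑ ^ 2 ∂ν) ^ (1 / (2 : ℝ)) := by gcongr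
    _ = C * (∫⁻ x, ‖g x‖ₑ ^ 2 ∂ν) ^ (1 / (2 : ℝ)) := by
      rw [ENNReal.mul_rpow_of_nonneg _ _ (by norm_num), one_div]
      congr 1
      exact_mod_cast ENNReal.pow_rpow_inv_natCast two_ne_zero C

variable (ν) in
def IsIntegralOperator (κ : X → X → ℝ) (T : Lp ℝ 2 ν →L[ℝ] Lp ℝ 2 ν) : Prop :=
  ∀ f : Lp ℝ 2 ν, T f =ᵐ[ν] fun x => ∫ y, κ x y * f y ∂ν

namespace IsIntegralOperator

variable {κ : X → X → ℝ} {T : Lp ℝ 2 ν →L[ℝ] Lp ℝ 2 ν}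

theorem norm_apply_le [SFinite ν] (hT : IsIntegralOperator ν κ T)
    (hκ : Measurable (Function.uncurry κ)) (hsymm : ∀ x y, κ x y = κ y x) {C : ℝ≥0}
    (hrow : ∀ᵐ x ∂ν, ∫⁻ y, ‖κ x y‖ₑ ∂ν ≤ C) (f : Lp ℝ 2 ν) : ‖T f‖ ≤ C * ‖f‖ := by
  have hcol : ∀ᵐ y ∂ν, ∫⁻ x, ‖κ x y‖ₑ ∂ν ≤ C := by simpa only [hsymm _ _] using hrow
  have hpt : ∀ᵐ x ∂ν, ‖T f x‖ₑ ≤ ∫⁻ y, ‖κ x y‖ₑ * ‖f y‖ₑ ∂ν := (hT f).mono fun x hx => by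
    simpa only [hx, enorm_mul] using enorm_integral_le_lintegral_enorm (fun y => κ x y * f y)
  have hsq : ∫⁻ x, ‖T f x‖ₑ ^ 2 ∂ν ≤ (C : ℝ≥0∞) ^ 2 * ∫⁻ y, ‖f y‖ₑ ^ 2 ∂ν := by
    calc ∫⁻ x, ‖T f x‖ₑ ^ 2 ∂ν ≤ ∫⁻ x, (∫⁻ y, ‖κ x y‖ₑ * ‖f y‖ₑ ∂ν) ^ 2 ∂ν :=
          lintegral_mono_ae (hpt.mono fun x hx => by gcongr)
      _ ≤ _ := by
        rw [sq]
        exact lintegral_sq_lintegral_mul_le hκ.enorm (Lp.aestronglyMeasurable f).enorm hrow hcol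
  rw [Lp.norm_def, Lp.norm_def, ← ENNReal.coe_toReal, ← ENNReal.toReal_mul]
  exact ENNReal.toReal_mono (by finiteness) (eLpNorm_two_le_mul_of_lintegral_sq_le hsq)

variable [IsFiniteMeasure ν]

/-- Where the kernel is not integrable the defining integrals are junk zeros; for `f ≥ 0`,
`T f = T (f + 1) - T 1` then vanishes there. -/
theorem ae_apply_eq_zero_of_not_integrable (hT : IsIntegralOperator ν κ T)
    (hκ : Measurable (Function.uncurry κ)) (hκ_nonneg : ∀ x y, 0 ≤ κ x y) {f : Lp ℝ 2 ν}
    (hf : 0 ≤ f) : ∀ᵐ x ∂ν, ¬ Integrable (κ x) ν → T f x = 0 := by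
  set one : Lp ℝ 2 ν := Lp.const 2 ν (1 : ℝ)
  have hf' : 0 ≤ᵐ[ν] f := (Lp.coeFn_nonneg f).mpr hf
  have hone : one =ᵐ[ν] fun _ => 1 := Lp.coeFn_const 2 ν (1 : ℝ)
  filter_upwards [hT one, hT (f + one), Lp.coeFn_add (T f) (T one)] with x h1 hf1 hTadd hbad
  have hκx : AEStronglyMeasurable (κ x) ν := hκ.of_uncurry_left.aestronglyMeasurable
  have hint1 : ¬ Integrable (fun y => κ x y * one y) ν := fun h => hbad <|
    h.congr (hone.mono fun y hy => by simp only [hy, mul_one])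
  have hintf1 : ¬ Integrable (fun y => κ x y * (f + one) y) ν := fun h => hbad <|
    h.mono hκx <| by
      filter_upwards [hf', hone, Lp.coeFn_add f one] with y (hfy : 0 ≤ f y) hy hadd
      have hκxy := hκ_nonneg x y
      rw [hadd, Pi.add_apply, hy, Real.norm_of_nonneg hκxy, Real.norm_of_nonneg (by positivity)]
      exact le_mul_of_one_le_right hκxy (by simp [hfy])
  rw [← map_add, Pi.add_apply, hf1, h1, integral_undef hint1, integral_undef hintf1] at hTadd
  linarith

/-- By Tonelli and the symmetry of `κ`, `x ↦ ∫⁻ y in G, κ x y` is integrable, so for almost every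
`x` the value `T 𝟙_G x` is the genuine integral `∫ y in G, κ x y`; where `κ x` is not integrable
this must vanish, and `κ x > 0` on `G ∌ x` then forces `ν G = 0`. -/
theorem ae_measure_eq_zero_of_not_integrable (hT : IsIntegralOperator ν κ T)
    (hκ : Measurable (Function.uncurry κ)) (hκ_nonneg : ∀ x y, 0 ≤ κ x y)
    (hsymm : ∀ x y, κ x y = κ y x) (hpos : ∀ x y, x ≠ y → 0 < κ x y) {G : Set X}
    (hG : MeasurableSet G) {c : ℝ≥0∞} (hc : c ≠ ∞) (hGc : ∀ y ∈ G, ∫⁻ z, ‖κ y z‖ₑ ∂ν ≤ c) :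
    ∀ᵐ x ∂ν, ¬ Integrable (κ x) ν → ν G = 0 := by
  set g : Lp ℝ 2 ν := indicatorConstLp 2 hG (measure_ne_top ν G) (1 : ℝ)
  have hg : g =ᵐ[ν] G.indicator fun _ => (1 : ℝ) := indicatorConstLp_coeFn
  have hg_nonneg : 0 ≤ g := by
    rw [← Lp.coeFn_nonneg]
    filter_upwards [hg] with y hy
    rw [hy]
    exact Set.indicator_nonneg (fun _ _ => zero_le_one) y
  have hfinite : ∀ᵐ x ∂ν, ∫⁻ y in G, ‖κ x y‖ₑ ∂ν < ∞ := by
    refine ae_lt_top (hκ.enorm.lintegral_prod_right') (ne_top_of_le_ne_top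
      (ENNReal.mul_ne_top hc (measure_ne_top ν G)) ?_)
    calc ∫⁻ x, ∫⁻ y in G, ‖κ x y‖ₑ ∂ν ∂ν = ∫⁻ y in G, ∫⁻ x, ‖κ y x‖ₑ ∂ν ∂ν := by
          rw [lintegral_lintegral_swap hκ.enorm.aemeasurable]
          simp only [hsymm _ _]
      _ ≤ ∫⁻ _ in G, c ∂ν := setLIntegral_mono measurable_const hGc
      _ = c * ν G := setLIntegral_const G c
  filter_upwards [ae_apply_eq_zero_of_not_integrable hT hκ hκ_nonneg hg_nonneg, hT g, hfinite]
    with x hTg hgx hx hbad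
  have hκx : AEStronglyMeasurable (κ x) ν := hκ.of_uncurry_left.aestronglyMeasurable
  have hxG : x ∉ G := fun hxG => hbad ⟨hκx, (hGc x hxG).trans_lt hc.lt_top⟩
  have hzero : ∫ y in G, κ x y ∂ν = 0 := by
    rw [← hTg hbad, hgx, ← integral_indicator hG]
    refine integral_congr_ae ?_
    filter_upwards [hg] with y hy
    simp only [hy, ← Set.indicator_mul_right, mul_one]
  have hκ_zero : κ x =ᵐ[ν.restrict G] 0 :=
    (setIntegral_eq_zero_iff_of_nonneg_ae (ae_of_all _ (hκ_nonneg x)) ⟨hκx.restrict, hx⟩).mp hzero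
  have hempty : ∀ᵐ _ ∂ν.restrict G, False := by
    filter_upwards [hκ_zero, ae_restrict_mem hG] with y h0 hy
    exact (hpos x y (ne_of_mem_of_not_mem hy hxG).symm).ne' h0
  rwa [Filter.eventually_false_iff_eq_bot, ae_eq_bot, Measure.restrict_eq_zero] at hempty

theorem ae_not_integrable (hT : IsIntegralOperator ν κ T)
    (hκ : Measurable (Function.uncurry κ)) (hκ_nonneg : ∀ x y, 0 ≤ κ x y)
    (hsymm : ∀ x y, κ x y = κ y x) (hpos : ∀ x y, x ≠ y → 0 < κ x y)
    (hbad : ¬ ∀ᵐ x ∂ν, Integrable (κ x) ν) : ∀ᵐ x ∂ν, ¬ Integrable (κ x) ν := by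
  set G : ℕ → Set X := fun n => {y | ∫⁻ z, ‖κ y z‖ₑ ∂ν ≤ n}
  have hG (n : ℕ) : MeasurableSet (G n) :=
    measurableSet_le hκ.enorm.lintegral_prod_right' measurable_const
  obtain ⟨x, hx, hGx⟩ := ((Filter.not_eventually.mp hbad).and_eventually (ae_all_iff.mpr
    fun n => ae_measure_eq_zero_of_not_integrable hT hκ hκ_nonneg hsymm hpos (hG n)
      (ENNReal.natCast_ne_top n) fun _ hy => hy)).exists
  have hcover : {y | Integrable (κ y) ν} ⊆ ⋃ n, G n := fun y hy => by
    obtain ⟨n, hn⟩ := ENNReal.exists_nat_gt hy.2.ne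
    exact Set.mem_iUnion.mpr ⟨n, hn.le⟩
  rw [ae_iff]
  simp only [not_not]
  exact measure_mono_null hcover (measure_iUnion_null fun n => hGx n hx)

theorem eq_zero_of_not_ae_integrable (hT : IsIntegralOperator ν κ T)
    (hκ : Measurable (Function.uncurry κ)) (hκ_nonneg : ∀ x y, 0 ≤ κ x y)
    (hsymm : ∀ x y, κ x y = κ y x) (hpos : ∀ x y, x ≠ y → 0 < κ x y)
    (hbad : ¬ ∀ᵐ x ∂ν, Integrable (κ x) ν) : T = 0 := by
  have hS := ae_not_integrable hT hκ hκ_nonneg hsymm hpos hbad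
  have hT_nonneg (f : Lp ℝ 2 ν) (hf : 0 ≤ f) : T f = 0 := by
    rw [Lp.eq_zero_iff_ae_eq_zero]
    filter_upwards [ae_apply_eq_zero_of_not_integrable hT hκ hκ_nonneg hf, hS] with x h hx
    exact h hx
  ext1 f
  rw [← posPart_sub_negPart f, map_sub, hT_nonneg _ (posPart_nonneg f),
    hT_nonneg _ (negPart_nonneg f), sub_zero]
  rfl

end IsIntegralOperator

end

section InvDistKernel

variable {E : Type*} [NormedAddCommGroup E]

noncomputable def invDistKernel (c : ℝ) (x y : E) : ℝ := c * ‖x - y‖⁻¹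

theorem invDistKernel_comm (c : ℝ) (x y : E) : invDistKernel c x y = invDistKernel c y x := by
  rw [invDistKernel, norm_sub_rev, invDistKernel]

theorem invDistKernel_nonneg {c : ℝ} (hc : 0 ≤ c) (x y : E) : 0 ≤ invDistKernel c x y := by
  unfold invDistKernel
  positivity

theorem invDistKernel_pos {c : ℝ} (hc : 0 < c) {x y : E} (hxy : x ≠ y) :
    0 < invDistKernel c x y :=
  mul_pos hc (inv_pos.mpr (norm_pos_iff.mpr (sub_ne_zero.mpr hxy)))

theorem measurable_invDistKernel [MeasurableSpace E] [BorelSpace E] [SecondCountableTopology E]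
    (c : ℝ) : Measurable (Function.uncurry (invDistKernel (E := E) c)) := by
  unfold invDistKernel
  fun_prop

end InvDistKernel

theorem mul_self_le_mul_of_le_toNNReal {a M : ℝ} (ha : 0 ≤ a) (h : a ≤ M.toNNReal) :
    a * a ≤ M * a := by
  rcases le_total 0 M with hM | hM
  · rw [Real.coe_toNNReal _ hM] at h
    exact mul_le_mul_of_nonneg_right h ha
  · rw [Real.toNNReal_of_nonpos hM, NNReal.coe_zero] at h
    simp [le_antisymm h ha]

theorem opNorm_iterated_kernel_bound_general
    (A : Set (EuclideanSpace ℝ (Fin 3)))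
    (ν : Measure (EuclideanSpace ℝ (Fin 3))) [IsFiniteMeasure ν]
    (hνA : ν Aᶜ = 0)
    (α₀ : ℝ) (hα₀ : 0 < α₀)
    (Γinf : ℝ)
    (hΓbd : ∀ x ∈ A, (1 / (4 * π)) * (∫ y in A, 1 / ‖x - y‖ ∂ν) ≤ Γinf)
    (T : Lp ℝ 2 ν →L[ℝ] Lp ℝ 2 ν)
    (hT : ∀ f : Lp ℝ 2 ν,
      (T f : EuclideanSpace ℝ (Fin 3) → ℝ)
        =ᵐ[ν] fun x => (α₀ / (4 * π)) * ∫ y in A, f y / ‖x - y‖ ∂ν) :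
    ‖T.comp T‖ ≤ 2 * α₀ * Γinf * ‖T‖ := by
  have hA : ν.restrict A = ν := Measure.restrict_eq_self_of_ae_mem (mem_ae_iff.mpr hνA)
  have hc : 0 < α₀ / (4 * π) := by positivity
  have hTκ : IsIntegralOperator ν (invDistKernel (α₀ / (4 * π))) T := fun f =>
    (hT f).trans <| ae_of_all _ fun x => by
      simp only [hA, invDistKernel, ← integral_const_mul]
      congr 1 with y
      ring
  by_cases hgood : ∀ᵐ x ∂ν, Integrable (invDistKernel (α₀ / (4 * π)) x) ν
  · have hrow : ∀ᵐ x ∂ν, ∫⁻ y, ‖invDistKernel (α₀ / (4 * π)) x y‖ₑ ∂ν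
        ≤ ENNReal.ofReal (α₀ * Γinf) := by
      filter_upwards [hgood, mem_ae_iff.mpr hνA] with x hx hxA
      rw [← ofReal_integral_norm_eq_lintegral_enorm hx]
      refine ENNReal.ofReal_le_ofReal ?_
      calc ∫ y, ‖invDistKernel (α₀ / (4 * π)) x y‖ ∂ν
          = α₀ * (1 / (4 * π) * ∫ y in A, 1 / ‖x - y‖ ∂ν) := by
            have hnorm (y) := Real.norm_of_nonneg (invDistKernel_nonneg hc.le x y)
            simp only [hnorm]
            simp only [hA, invDistKernel, integral_const_mul, one_div]
            ring
        _ ≤ α₀ * Γinf := by gcongr; exact hΓbd x hxA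
    have hnorm : ‖T‖ ≤ (α₀ * Γinf).toNNReal := T.opNorm_le_bound (NNReal.coe_nonneg _)
      (hTκ.norm_apply_le (measurable_invDistKernel _) (invDistKernel_comm _) hrow)
    have hsq := mul_self_le_mul_of_le_toNNReal (norm_nonneg T) hnorm
    calc ‖T.comp T‖ ≤ ‖T‖ * ‖T‖ := T.opNorm_comp_le T
      _ ≤ 2 * α₀ * Γinf * ‖T‖ := by nlinarith [mul_self_nonneg ‖T‖]
  · simp [hTκ.eq_zero_of_not_ae_integrable (measurable_invDistKernel _)
      (invDistKernel_nonneg hc.le) (invDistKernel_comm _) (fun _ _ => invDistKernel_pos hc) hgood]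

theorem opNorm_iterated_kernel_bound
    (A : Set (EuclideanSpace ℝ (Fin 3))) (hA : IsCompact A)
    (ν : Measure (EuclideanSpace ℝ (Fin 3))) [IsFiniteMeasure ν]
    (hνA : ν Aᶜ = 0)
    (α₀ : ℝ) (hα₀ : 0 < α₀)
    (Γinf : ℝ)
    (hΓinf : Γinf = (1 / (4 * π)) * ⨆ x : A, ∫ y in A, 1 / ‖(x : EuclideanSpace ℝ (Fin 3)) - y‖ ∂ν)
    (hΓbd : ∀ x ∈ A, (1 / (4 * π)) * (∫ y in A, 1 / ‖x - y‖ ∂ν) ≤ Γinf)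
    (T : Lp ℝ 2 ν →L[ℝ] Lp ℝ 2 ν)
    (hT : ∀ f : Lp ℝ 2 ν,
      (T f : EuclideanSpace ℝ (Fin 3) → ℝ)
        =ᵐ[ν] fun x => (α₀ / (4 * π)) * ∫ y in A, f y / ‖x - y‖ ∂ν) :
    ‖T.comp T‖ ≤ 2 * α₀ * Γinf * ‖T‖ :=
  opNorm_iterated_kernel_bound_general A ν hνA α₀ hα₀ Γinf hΓbd T hT
end

section
/- Let u be the function on ℝ³ equal to 1 for |x| ≤ 1 and 1/|x| for |x| ≥ 1. Then u is continuous, harmonic off the unit sphere, tends to 0 at infinity, and satisfies the jump condition ∂u/∂n_e + ∂u/∂n_i = −u on the unit sphere, i.e., the sum of the exterior and interior normal derivatives equals −1·u(x) for every x with |x| = 1. -/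
/-- The Laplacian of a function on `ℝ³`, written via second partial derivatives in the
standard orthonormal directions. -/
noncomputable def laplacian3 (u : EuclideanSpace ℝ (Fin 3) → ℝ)
    (x : EuclideanSpace ℝ (Fin 3)) : ℝ :=
  ∑ i : Fin 3,
    fderiv ℝ (fun y => fderiv ℝ u y (EuclideanSpace.single i 1)) x (EuclideanSpace.single i 1)

/-!
Write `u x = (max 1 ‖x‖)⁻¹`. Inside the ball `u` is locally constant; outside it is the
Newtonian potential `‖x‖⁻¹`, which is harmonic in `ℝ³` because in dimension `n`
`Δ ‖x‖ ^ p = p (p + n - 2) ‖x‖ ^ (p - 2)` away from the origin. On the sphere the radial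
profile is `(1 + t)⁻¹` outward and constantly `1` inward, so the one-sided normal derivatives
are `-1` and `0`, and their sum is `-1 = -u x`.
-/

open Filter Set Topology
open scoped RealInnerProductSpace

section NormRpow

variable {E : Type*} [NormedAddCommGroup E] [InnerProductSpace ℝ E] {x : E}

theorem hasFDerivAt_norm_rpow_of_ne_zero (p : ℝ) (hx : x ≠ 0) :
    HasFDerivAt (fun y : E ↦ ‖y‖ ^ p) ((p * ‖x‖ ^ (p - 2)) • innerSL ℝ x) x := by
  convert ((hasStrictFDerivAt_norm_sq x).rpow_const (p := p / 2)
    (by simp [hx])).hasFDerivAt using 1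
  · ext y
    rw [← Real.rpow_natCast_mul (norm_nonneg _)]
    ring_nf
  · rw [← Real.rpow_natCast_mul (norm_nonneg _), ← Nat.cast_smul_eq_nsmul ℝ, smul_smul]
    ring_nf

theorem fderiv_norm_rpow_apply (p : ℝ) (hx : x ≠ 0) (v : E) :
    fderiv ℝ (fun y : E ↦ ‖y‖ ^ p) x v = p * ‖x‖ ^ (p - 2) * ⟪v, x⟫ := by
  simp [(hasFDerivAt_norm_rpow_of_ne_zero p hx).fderiv, real_inner_comm]

theorem fderiv_fderiv_norm_rpow_apply (p : ℝ) (hx : x ≠ 0) (v w : E) :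
    fderiv ℝ (fun y ↦ fderiv ℝ (fun z : E ↦ ‖z‖ ^ p) y v) x w =
      p * ((p - 2) * ‖x‖ ^ (p - 4) * ⟪x, w⟫ * ⟪v, x⟫ + ‖x‖ ^ (p - 2) * ⟪v, w⟫) := by
  have hpartial : (fun y ↦ fderiv ℝ (fun z : E ↦ ‖z‖ ^ p) y v) =ᶠ[𝓝 x]
      fun y ↦ p * ‖y‖ ^ (p - 2) * innerSL ℝ v y :=
    (eventually_ne_nhds hx).mono fun y hy ↦ fderiv_norm_rpow_apply p hy v
  have hderiv := ((hasFDerivAt_norm_rpow_of_ne_zero (p - 2) hx).const_mul p).fun_mul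
    (innerSL ℝ v).hasFDerivAt
  rw [hpartial.fderiv_eq, hderiv.fderiv]
  simp only [add_apply, smul_apply, innerSL_apply_apply, smul_eq_mul]
  ring_nf

theorem sum_fderiv_fderiv_norm_rpow_orthonormalBasis {ι : Type*} [Fintype ι]
    (b : OrthonormalBasis ι ℝ E) (p : ℝ) (hx : x ≠ 0) :
    ∑ i, fderiv ℝ (fun y ↦ fderiv ℝ (fun z : E ↦ ‖z‖ ^ p) y (b i)) x (b i) =
      p * (p + Fintype.card ι - 2) * ‖x‖ ^ (p - 2) := by
  have hnorm : 0 < ‖x‖ := norm_pos_iff.mpr hx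
  have hpow : ‖x‖ ^ (p - 4) * ‖x‖ ^ 2 = ‖x‖ ^ (p - 2) := by
    rw [← Real.rpow_natCast, ← Real.rpow_add hnorm]
    ring_nf
  have hterm : ∀ i, fderiv ℝ (fun y ↦ fderiv ℝ (fun z : E ↦ ‖z‖ ^ p) y (b i)) x (b i) =
      p * (p - 2) * ‖x‖ ^ (p - 4) * ⟪x, b i⟫ ^ 2 + p * ‖x‖ ^ (p - 2) := fun i ↦ by
    rw [fderiv_fderiv_norm_rpow_apply p hx, real_inner_comm x, real_inner_self_eq_norm_sq,
      b.orthonormal.1 i]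
    ring
  simp only [hterm, Finset.sum_add_distrib, ← Finset.mul_sum, b.sum_sq_inner_left,
    Finset.sum_const, Finset.card_univ, nsmul_eq_mul]
  rw [mul_assoc _ (‖x‖ ^ (p - 4)), hpow]
  ring

end NormRpow

theorem laplacian3_eq_sum_basisFun (u : EuclideanSpace ℝ (Fin 3) → ℝ)
    (x : EuclideanSpace ℝ (Fin 3)) :
    laplacian3 u x = ∑ i, fderiv ℝ (fun y ↦ fderiv ℝ u y (EuclideanSpace.basisFun (Fin 3) ℝ i)) x
      (EuclideanSpace.basisFun (Fin 3) ℝ i) := by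
  simp only [laplacian3, EuclideanSpace.basisFun_apply]

theorem laplacian3_congr_nhds {u v : EuclideanSpace ℝ (Fin 3) → ℝ} {x : EuclideanSpace ℝ (Fin 3)}
    (h : u =ᶠ[𝓝 x] v) :
    laplacian3 u x = laplacian3 v x :=
  Finset.sum_congr rfl fun i _ ↦ by
    have hpartial : (fun y ↦ fderiv ℝ u y (EuclideanSpace.single i 1)) =ᶠ[𝓝 x]
        fun y ↦ fderiv ℝ v y (EuclideanSpace.single i 1) :=
      (h.fderiv (𝕜 := ℝ)).mono fun y hy ↦ by simp only [hy]
    rw [hpartial.fderiv_eq]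

theorem laplacian3_const (c : ℝ) (x : EuclideanSpace ℝ (Fin 3)) : laplacian3 (fun _ ↦ c) x = 0 := by
  simp [laplacian3]

theorem laplacian3_inv_norm {x : EuclideanSpace ℝ (Fin 3)} (hx : x ≠ 0) :
    laplacian3 (fun y ↦ ‖y‖ ^ (-1 : ℝ)) x = 0 := by
  rw [laplacian3_eq_sum_basisFun, sum_fderiv_fderiv_norm_rpow_orthonormalBasis _ _ hx]
  norm_num

section Profile

variable {F : Type*} [NormedAddCommGroup F]

theorem continuous_inv_max_one_norm : Continuous fun x : F ↦ (max 1 ‖x‖)⁻¹ :=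
  (continuous_const.max continuous_norm).inv₀ fun _ ↦ (lt_max_of_lt_left one_pos).ne'

theorem tendsto_inv_max_one_norm_cocompact [ProperSpace F] :
    Tendsto (fun x : F ↦ (max 1 ‖x‖)⁻¹) (cocompact F) (𝓝 0) :=
  (tendsto_atTop_mono (fun _ ↦ le_max_right _ _) tendsto_norm_cocompact_atTop).inv_tendsto_atTop

theorem inv_max_one_norm_eventuallyEq_one {x : F} (hx : ‖x‖ < 1) :
    (fun y : F ↦ (max 1 ‖y‖)⁻¹) =ᶠ[𝓝 x] fun _ ↦ 1 :=
  eventually_of_mem (isOpen_lt continuous_norm continuous_const |>.mem_nhds hx)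
    fun y (hy : ‖y‖ < 1) ↦ by simp [max_eq_left hy.le]

theorem inv_max_one_norm_eventuallyEq_norm_rpow {x : F} (hx : 1 < ‖x‖) :
    (fun y : F ↦ (max 1 ‖y‖)⁻¹) =ᶠ[𝓝 x] fun y ↦ ‖y‖ ^ (-1 : ℝ) :=
  eventually_of_mem (isOpen_lt continuous_const continuous_norm |>.mem_nhds hx)
    fun y (hy : 1 < ‖y‖) ↦ by simp [max_eq_right hy.le, Real.rpow_neg_one]

variable [NormedSpace ℝ F]

theorem hasDerivWithinAt_inv_max_one_norm_add_smul {x : F} (hx : ‖x‖ = 1) :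
    HasDerivWithinAt (fun t : ℝ ↦ (max 1 ‖x + t • x‖)⁻¹) (-1) (Ici 0) 0 := by
  have hinv : HasDerivAt (fun t : ℝ ↦ (1 + t)⁻¹) (-1) 0 := by
    simpa using ((hasDerivAt_id (0 : ℝ)).const_add 1).fun_inv (by norm_num)
  refine hinv.hasDerivWithinAt.congr (fun t (ht : 0 ≤ t) ↦ ?_) (by simp [hx])
  have hxt : x + t • x = (1 + t) • x := by rw [add_smul, one_smul]
  rw [hxt, norm_smul, hx, mul_one, Real.norm_of_nonneg (by linarith),
    max_eq_right (by linarith)]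

theorem hasDerivWithinAt_inv_max_one_norm_add_smul_neg {x : F} (hx : ‖x‖ = 1) :
    HasDerivWithinAt (fun t : ℝ ↦ (max 1 ‖x + t • -x‖)⁻¹) 0 (Ici 0) 0 := by
  refine (hasDerivWithinAt_const 0 (Ici 0) (1 : ℝ)).congr_of_eventuallyEq ?_ (by simp [hx])
  filter_upwards [self_mem_nhdsWithin, nhdsWithin_le_nhds (eventually_lt_nhds two_pos)]
    with t (ht₀ : 0 ≤ t) ht₂
  have hxt : x + t • -x = (1 - t) • x := by rw [sub_smul, one_smul, smul_neg, sub_eq_add_neg]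
  rw [hxt, norm_smul, hx, mul_one, Real.norm_eq_abs,
    max_eq_left (abs_le.mpr ⟨by linarith, by linarith⟩), inv_one]

end Profile

theorem laplacian3_inv_max_one_norm {x : EuclideanSpace ℝ (Fin 3)} (hx : ‖x‖ ≠ 1) :
    laplacian3 (fun y ↦ (max 1 ‖y‖)⁻¹) x = 0 := by
  rcases hx.lt_or_gt with hlt | hgt
  · rw [laplacian3_congr_nhds (inv_max_one_norm_eventuallyEq_one hlt), laplacian3_const]
  · rw [laplacian3_congr_nhds (inv_max_one_norm_eventuallyEq_norm_rpow hgt),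
      laplacian3_inv_norm (norm_pos_iff.mp (one_pos.trans hgt))]

theorem critical_sphere_solution
    (u : EuclideanSpace ℝ (Fin 3) → ℝ)
    (hu : ∀ x, u x = if ‖x‖ ≤ 1 then 1 else 1 / ‖x‖) :
    Continuous u ∧
    (∀ x, ‖x‖ ≠ 1 → laplacian3 u x = 0) ∧
    Tendsto u (Filter.cocompact (EuclideanSpace ℝ (Fin 3))) (nhds 0) ∧
    (∀ x : EuclideanSpace ℝ (Fin 3), ‖x‖ = 1 →
      ∃ de di : ℝ,
        HasDerivWithinAt (fun t : ℝ => u (x + t • x)) de (Set.Ici 0) 0 ∧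
        HasDerivWithinAt (fun t : ℝ => u (x + t • (-x))) di (Set.Ici 0) 0 ∧
        de + di = -u x) := by
  obtain rfl : u = fun x ↦ (max 1 ‖x‖)⁻¹ := funext fun x ↦ by
    rw [hu]
    split_ifs with h
    · rw [max_eq_left h, inv_one]
    · rw [max_eq_right (not_le.mp h).le, one_div]
  refine ⟨continuous_inv_max_one_norm, fun x hx ↦ laplacian3_inv_max_one_norm hx,
    tendsto_inv_max_one_norm_cocompact, fun x hx ↦ ⟨-1, 0,
      hasDerivWithinAt_inv_max_one_norm_add_smul hx,
      hasDerivWithinAt_inv_max_one_norm_add_smul_neg hx, by simp [hx]⟩⟩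
end
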